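/- arXiv:1808.07172 — 2 statements merged into one kernel-verified Lean document; each statement's English description precedes it below -/
import Mathlib

section
/- Let w_1, …, w_n be independent Gaussian N(0, s²) random variables, let x ∈ ℝ^n be fixed, and set u = Σ_{k=1}^n w_k x_k. If f : ℝ → ℝ is Lipschitz with constant K, then for every index i, |E[f(u) w_i²] − s² E[f(u)]| ≤ 3 √(2/π) · K · |x_i| · s³; that is, the expectation of f(u) w_i² factorizes into E[f(u)] E[w_i²] up to an error of order s³. -/
open MeasureTheory ProbabilityTheory NNReal

open scoped Real ENNReal

/-!
Write `u = V + w i * x i` with `V = ∑_{k ≠ i} w k * x k`, which is independent of `w i`.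
Then `f V` is independent of `w i ^ 2` and drops out of `E[f(u) w_i²] - s² E[f(u)]`, leaving
`E[g w_i²] - s² E[g]` for the increment `g = f u - f V`. Lipschitz continuity gives
`|g| ≤ K |x i| |w i|`, so the difference is at most `K |x i| (E|w i|³ + s² E|w i|)`, and the
Gaussian absolute moments `E|w i| = √(2/π) s`, `E|w i|³ = 2 √(2/π) s³` produce the constant.
-/

lemma integral_abs_rpow_gaussianReal (v : ℝ≥0) {p : ℝ} (hp : -1 < p) :
    ∫ y, |y| ^ p ∂gaussianReal 0 v = (2 * v) ^ (p / 2) * Real.Gamma ((p + 1) / 2) / √π := by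
  rcases eq_or_ne v 0 with rfl | hv
  · rcases eq_or_ne p 0 with rfl | hp0
    · rw [zero_div, Real.rpow_zero, zero_add, one_mul, Real.Gamma_one_half_eq,
        div_self (by positivity)]
      simp
    · simp [Real.zero_rpow hp0, Real.zero_rpow (div_ne_zero hp0 two_ne_zero)]
  have hv' : (0 : ℝ) < 2 * v := by positivity
  have hdensity (y : ℝ) : gaussianPDFReal 0 v y • |y| ^ p
      = (√(2 * π * v))⁻¹ * (|y| ^ p * Real.exp (-(2 * v : ℝ)⁻¹ * |y| ^ (2 : ℝ))) := by
    simp only [gaussianPDFReal_def, smul_eq_mul, Real.rpow_two, sq_abs, sub_zero]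
    field_simp
  simp_rw [integral_gaussianReal_eq_integral_smul hv, hdensity, integral_const_mul]
  rw [integral_comp_abs (f := fun t ↦ t ^ p * Real.exp (-(2 * v : ℝ)⁻¹ * t ^ (2 : ℝ))),
    integral_rpow_mul_exp_neg_mul_rpow two_pos hp (inv_pos.2 hv'), Real.inv_rpow hv'.le,
    ← Real.rpow_neg hv'.le, neg_div, neg_neg, add_div, Real.rpow_add hv', ← Real.sqrt_eq_rpow,
    show 2 * π * v = π * (2 * v) by ring, Real.sqrt_mul Real.pi_pos.le]
  field_simp

lemma integral_abs_gaussianReal (v : ℝ≥0) : ∫ y, |y| ∂gaussianReal 0 v = √(2 / π) * √v := by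
  have h := integral_abs_rpow_gaussianReal v (p := 1) (by norm_num)
  simp only [Real.rpow_one] at h
  rw [h, ← Real.sqrt_eq_rpow, show ((1 : ℝ) + 1) / 2 = 1 by norm_num, Real.Gamma_one,
    Real.sqrt_mul zero_le_two, Real.sqrt_div zero_le_two]
  ring

lemma integral_abs_pow_three_gaussianReal (v : ℝ≥0) :
    ∫ y, |y| ^ 3 ∂gaussianReal 0 v = 2 * √(2 / π) * √v ^ 3 := by
  have h := integral_abs_rpow_gaussianReal v (p := 3) (by norm_num)
  simp only [Real.rpow_ofNat] at h
  rw [h, show ((3 : ℝ) + 1) / 2 = 1 + 1 by norm_num, Real.Gamma_add_one one_ne_zero,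
    Real.Gamma_one, show (3 : ℝ) / 2 = 1 + 1 / 2 by norm_num,
    Real.rpow_add' (by positivity) (by norm_num), Real.rpow_one, ← Real.sqrt_eq_rpow,
    Real.sqrt_mul zero_le_two, Real.sqrt_div zero_le_two]
  field_simp
  nth_rw 1 [← Real.sq_sqrt v.coe_nonneg]
  ring

lemma integral_sq_gaussianReal (v : ℝ≥0) : ∫ y, y ^ 2 ∂gaussianReal 0 v = v := by
  rw [← variance_of_integral_eq_zero aemeasurable_id' integral_id_gaussianReal,
    variance_fun_id_gaussianReal]

lemma LipschitzWith.integrable_comp {α E F : Type*} [MeasurableSpace α] {μ : Measure α}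
    [IsFiniteMeasure μ] [NormedAddCommGroup E] [NormedAddCommGroup F] {K : ℝ≥0} {f : E → F}
    (hf : LipschitzWith K f) {V : α → E} (hV : Integrable V μ) :
    Integrable (fun a ↦ f (V a)) μ := by
  refine ((integrable_const ‖f 0‖).add (hV.norm.const_mul K)).mono'
    (hf.continuous.comp_aestronglyMeasurable hV.aestronglyMeasurable) (ae_of_all _ fun a ↦ ?_)
  have hlip := hf.dist_le_mul (V a) 0
  rw [dist_eq_norm, dist_eq_norm, sub_zero] at hlip
  have htriangle := norm_le_insert' (f (V a)) (f 0)
  simp only [Pi.add_apply]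
  linarith

lemma ProbabilityTheory.iIndepFun.indepFun_sum_mul_of_notMem {Ω ι : Type*} [MeasurableSpace Ω]
    {P : Measure Ω} {w : ι → Ω → ℝ} (hw : iIndepFun w P) (hw_meas : ∀ k, Measurable (w k))
    (c : ι → ℝ) {s : Finset ι} {i : ι} (hi : i ∉ s) :
    IndepFun (fun ω ↦ ∑ k ∈ s, w k ω * c k) (w i) P := by
  have h : IndepFun (fun ω ↦ ∑ k : s, w k ω * c k) (w i) P :=
    (hw.indepFun_finset s {i} (Finset.disjoint_singleton_right.2 hi) hw_meas).comp
      (φ := fun y : s → ℝ ↦ ∑ k, y k * c k)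
      (ψ := fun y : ({i} : Finset ι) → ℝ ↦ y ⟨i, Finset.mem_singleton_self i⟩)
      (by fun_prop) (measurable_pi_apply _)
  convert h using 2 with ω
  exact (Finset.sum_coe_sort s fun k ↦ w k ω * c k).symm

theorem ProbabilityTheory.IndepFun.abs_integral_comp_add_mul_sq_sub_le {Ω : Type*}
    [MeasurableSpace Ω] {P : Measure Ω} [IsProbabilityMeasure P] {V W : Ω → ℝ}
    (hVW : IndepFun V W P) (hV : AEMeasurable V P) (hW : MemLp W 3 P) {f : ℝ → ℝ} {K : ℝ≥0}
    (hf : LipschitzWith K f) (hfV : Integrable (fun ω ↦ f (V ω)) P) (a : ℝ) :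
    |∫ ω, f (V ω + W ω * a) * W ω ^ 2 ∂P - (∫ ω, W ω ^ 2 ∂P) * ∫ ω, f (V ω + W ω * a) ∂P|
      ≤ K * |a| * (∫ ω, |W ω| ^ 3 ∂P + (∫ ω, W ω ^ 2 ∂P) * ∫ ω, |W ω| ∂P) := by
  set m := ∫ ω, W ω ^ 2 ∂P
  set g : Ω → ℝ := fun ω ↦ f (V ω + W ω * a) - f (V ω) with hg_def
  have hg_le (ω : Ω) : |g ω| ≤ K * |a| * |W ω| := by
    have hlip := hf.dist_le_mul (V ω + W ω * a) (V ω)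
    rw [Real.dist_eq, Real.dist_eq, add_sub_cancel_left, abs_mul] at hlip
    linarith
  have hgW_le (ω : Ω) : |g ω * W ω ^ 2| ≤ K * |a| * |W ω| ^ 3 := by
    rw [abs_mul, abs_pow, pow_succ' _ 2, ← mul_assoc]
    exact mul_le_mul_of_nonneg_right (hg_le ω) (sq_nonneg _)
  have hW1 : Integrable (fun ω ↦ |W ω|) P :=
    (memLp_one_iff_integrable.1 (hW.mono_exponent (by norm_num))).abs
  have hW2 : Integrable (fun ω ↦ W ω ^ 2) P := (hW.mono_exponent (by norm_num)).integrable_sq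
  have hW3 : Integrable (fun ω ↦ |W ω| ^ 3) P := hW.integrable_norm_pow (p := 3) (by norm_num)
  have hg_meas : AEStronglyMeasurable g P :=
    (hf.continuous.measurable.comp_aemeasurable
      (hV.add (hW.aestronglyMeasurable.aemeasurable.mul_const a))).aestronglyMeasurable.sub
      hfV.aestronglyMeasurable
  have hg : Integrable g P := (hW1.const_mul _).mono' hg_meas (ae_of_all _ hg_le)
  have hgW : Integrable (fun ω ↦ g ω * W ω ^ 2) P :=
    (hW3.const_mul _).mono' (hg_meas.mul hW2.aestronglyMeasurable) (ae_of_all _ hgW_le)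
  have hVW' : IndepFun (fun ω ↦ f (V ω)) (fun ω ↦ W ω ^ 2) P :=
    hVW.comp hf.continuous.measurable (measurable_id.pow_const 2)
  have hfVW : Integrable (fun ω ↦ f (V ω) * W ω ^ 2) P := hVW'.integrable_mul hfV hW2
  have hprod : ∫ ω, f (V ω) * W ω ^ 2 ∂P = (∫ ω, f (V ω) ∂P) * m :=
    hVW'.integral_fun_mul_eq_mul_integral hfV.aestronglyMeasurable hW2.aestronglyMeasurable
  have hsplit : ∫ ω, f (V ω + W ω * a) * W ω ^ 2 ∂P - m * ∫ ω, f (V ω + W ω * a) ∂P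
      = ∫ ω, g ω * W ω ^ 2 ∂P - m * ∫ ω, g ω ∂P := by
    have h_mul : ∫ ω, f (V ω + W ω * a) * W ω ^ 2 ∂P
        = ∫ ω, f (V ω) * W ω ^ 2 ∂P + ∫ ω, g ω * W ω ^ 2 ∂P := by
      rw [← integral_add hfVW hgW]
      congr with ω
      ring
    have h_comp : ∫ ω, f (V ω + W ω * a) ∂P = ∫ ω, f (V ω) ∂P + ∫ ω, g ω ∂P := by
      rw [← integral_add hfV hg]
      simp only [hg_def, add_sub_cancel]
    rw [h_mul, h_comp, hprod]
    ring
  have hm : 0 ≤ m := integral_nonneg fun ω ↦ sq_nonneg _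
  calc _ = |∫ ω, g ω * W ω ^ 2 ∂P - m * ∫ ω, g ω ∂P| := by rw [hsplit]
    _ ≤ |∫ ω, g ω * W ω ^ 2 ∂P| + m * |∫ ω, g ω ∂P| :=
        (abs_sub _ _).trans_eq (by rw [abs_mul, abs_of_nonneg hm])
    _ ≤ ∫ ω, K * |a| * |W ω| ^ 3 ∂P + m * ∫ ω, K * |a| * |W ω| ∂P := by
        gcongr
        · exact abs_integral_le_integral_abs.trans
            (integral_mono hgW.abs (hW3.const_mul _) hgW_le)
        · exact abs_integral_le_integral_abs.trans (integral_mono hg.abs (hW1.const_mul _) hg_le)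
    _ = K * |a| * (∫ ω, |W ω| ^ 3 ∂P + m * ∫ ω, |W ω| ∂P) := by
        rw [integral_const_mul, integral_const_mul]
        ring

/-- **Self-averaging property, diagonal case.**
Let `w 1, …, w n` be independent `N(0, s²)` Gaussian random variables, `x ∈ ℝ^n` fixed,
`u = ∑ k w k * x k`, and `f` Lipschitz with constant `K`.  Then for every index `i`,
`|E[f(u) w i²] − s² E[f(u)]| ≤ 3 √(2/π) K |x i| s³`; that is, `E[f(u) w i²]` factorizes
into `E[f(u)] E[w i²]` up to an error of order `s³`. -/
theorem self_averaging_diagonal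
    {Ω : Type*} [MeasurableSpace Ω] (P : Measure Ω) [IsProbabilityMeasure P]
    (n : ℕ) (s : ℝ≥0) (w : Fin n → Ω → ℝ) (x : Fin n → ℝ)
    (hw_meas : ∀ k, Measurable (w k))
    (hw_law : ∀ k, Measure.map (w k) P = gaussianReal 0 (s ^ 2))
    (hindep : iIndepFun w P)
    (f : ℝ → ℝ) (K : ℝ≥0) (hf : LipschitzWith K f)
    (i : Fin n) :
    |(∫ ω, f (∑ k, w k ω * x k) * (w i ω) ^ 2 ∂P)
        - (s : ℝ) ^ 2 * ∫ ω, f (∑ k, w k ω * x k) ∂P|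
      ≤ 3 * Real.sqrt (2 / Real.pi) * K * |x i| * (s : ℝ) ^ 3 := by
  have hmemLp (k : Fin n) (p : ℝ≥0∞) (hp : p ≠ ∞) : MemLp (w k) p P := by
    rw [← Function.id_comp (w k), ← memLp_map_measure_iff (by fun_prop) (hw_meas k).aemeasurable,
      hw_law k]
    exact memLp_id_gaussianReal' p hp
  have hmoment (g : ℝ → ℝ) (hg : Measurable g) :
      ∫ ω, g (w i ω) ∂P = ∫ y, g y ∂gaussianReal 0 (s ^ 2) := by
    rw [← hw_law i, integral_map (hw_meas i).aemeasurable hg.aestronglyMeasurable]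
  set V : Ω → ℝ := fun ω ↦ ∑ k ∈ Finset.univ.erase i, w k ω * x k
  have hsum (ω : Ω) : ∑ k, w k ω * x k = V ω + w i ω * x i :=
    (Finset.sum_erase_add _ _ (Finset.mem_univ i)).symm
  have hV : Integrable V P := integrable_finsetSum _ fun k _ ↦
    (memLp_one_iff_integrable.1 (hmemLp k 1 ENNReal.one_ne_top)).mul_const (x k)
  have hbound := (hindep.indepFun_sum_mul_of_notMem hw_meas x (Finset.notMem_erase i _)
    ).abs_integral_comp_add_mul_sq_sub_le hV.aemeasurable (hmemLp i 3 ENNReal.ofNat_ne_top) hf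
    (hf.integrable_comp hV) (x i)
  simp only [hmoment (· ^ 2) (measurable_id.pow_const 2), hmoment (|·|) measurable_abs,
    hmoment (|·| ^ 3) (measurable_abs.pow_const 3), integral_sq_gaussianReal,
    integral_abs_gaussianReal, integral_abs_pow_three_gaussianReal, NNReal.coe_pow,
    Real.sqrt_sq s.coe_nonneg] at hbound
  simp_rw [hsum]
  convert hbound using 1
  ring
end

section
/- Let n ≥ 1, let w ∈ ℝ^n be nonzero, and let A₀₀, A₀ₙ, Aₙₙ be real numbers with A₀₀ ≠ 0 and D := A₀₀ Aₙₙ − A₀ₙ² ≠ 0. With G the (n+1)×(n+1) matrix A₀₀ I_{n+1} + ((Aₙₙ − A₀₀)/‖w‖²) w̃ w̃ᵀ + (A₀ₙ/‖w‖)(e₀ w̃ᵀ + w̃ e₀ᵀ), where w̃ = (w, 0) and e₀ = (0, …, 0, 1), and for any x ∈ ℝ^n with augmented vector x* = (x, 1) ∈ ℝ^{n+1}, the natural-gradient direction G⁻¹ x* is given explicitly in split form: its first n coordinates equal Ā₀₀ x + (X (w·x)/‖w‖² + Y/‖w‖) w and its last coordinate equals Ā₀₀ + Y (w·x)/‖w‖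 + Z, where Ā₀₀ = 1/A₀₀, X = A₀₀/D − 1/A₀₀, Y = −A₀ₙ/D, Z = Aₙₙ/D − 1/A₀₀. -/
/-!
With the orthonormal pair `p = w̃ / ‖w‖`, `q = e₀`, the matrix `G` is the identity times `A₀₀`
on the orthogonal complement of `span {p, q}`, and on that plane it is the symmetric matrix
`[[Aₙₙ, A₀ₙ], [A₀ₙ, A₀₀]]` in the basis `(p, q)`. Hence `G⁻¹` is `A₀₀⁻¹` on the complement and
`D⁻¹ [[A₀₀, -A₀ₙ], [-A₀ₙ, Aₙₙ]]` on the plane, which yields `X`, `Y`, `Z`; applying it to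
`x* = (x, 1)` only needs `p ⬝ x* = (w ⬝ x) / ‖w‖` and `q ⬝ x* = 1`.
-/

open Matrix

section PairMatrix

variable {K m : Type*} [Field K] [DecidableEq m]

def pairMatrix (p q : m → K) (a b c d : K) : Matrix m m K :=
  a • 1 + b • vecMulVec p p + c • (vecMulVec q p + vecMulVec p q) + d • vecMulVec q q

theorem pairMatrix_smul_left (r : K) (p q : m → K) (a b c d : K) :
    pairMatrix (r • p) q a b c d = pairMatrix p q a (b * r ^ 2) (c * r) d := by
  simp only [pairMatrix, smul_vecMulVec, vecMulVec_smul, smul_add, smul_smul]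
  ring_nf

variable [Fintype m]

theorem pairMatrix_mulVec (p q v : m → K) (a b c d : K) :
    pairMatrix p q a b c d *ᵥ v
      = a • v + (b * (p ⬝ᵥ v) + c * (q ⬝ᵥ v)) • p + (c * (p ⬝ᵥ v) + d * (q ⬝ᵥ v)) • q := by
  simp only [pairMatrix, add_mulVec, smul_mulVec, one_mulVec, vecMulVec_mulVec,
    op_smul_eq_smul]
  module

theorem pairMatrix_inv {p q : m → K} (hp : p ⬝ᵥ p = 1) (hq : q ⬝ᵥ q = 1) (hpq : p ⬝ᵥ q = 0)
    {a c d : K} (ha : a ≠ 0) (hD : a * d - c ^ 2 ≠ 0) :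
    (pairMatrix p q a (d - a) c 0)⁻¹
      = pairMatrix p q a⁻¹ (a / (a * d - c ^ 2) - a⁻¹) (-c / (a * d - c ^ 2))
          (d / (a * d - c ^ 2) - a⁻¹) := by
  refine inv_eq_right_inv (ext_iff_mulVec.mpr fun v => ?_)
  have hqp : q ⬝ᵥ p = 0 := by rw [dotProduct_comm, hpq]
  rw [← mulVec_mulVec, one_mulVec, pairMatrix_mulVec, pairMatrix_mulVec]
  simp only [dotProduct_add, dotProduct_smul, hp, hq, hpq, hqp, smul_eq_mul]
  ext i
  simp only [Pi.add_apply, Pi.smul_apply, smul_eq_mul]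
  field_simp
  ring

end PairMatrix

theorem snoc_dotProduct_snoc {R : Type*} [NonUnitalNonAssocSemiring R] {n : ℕ}
    (u v : Fin n → R) (x y : R) :
    (Fin.snoc u x : Fin (n + 1) → R) ⬝ᵥ Fin.snoc v y = u ⬝ᵥ v + x * y := by
  simp [dotProduct, Fin.sum_univ_castSucc]

theorem sq_sqrt_sum_sq {ι : Type*} [Fintype ι] (w : ι → ℝ) :
    Real.sqrt (∑ k, w k ^ 2) ^ 2 = w ⬝ᵥ w := by
  rw [Real.sq_sqrt (by positivity)]
  simp only [dotProduct, sq]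

theorem sqrt_sum_sq_ne_zero {ι : Type*} [Fintype ι] {w : ι → ℝ} (hw : w ≠ 0) :
    Real.sqrt (∑ k, w k ^ 2) ≠ 0 := by
  intro h
  apply hw
  rw [← dotProduct_self_eq_zero, ← sq_sqrt_sum_sq, h, sq, mul_zero]

theorem unitwise_natural_gradient_general
    (n : ℕ) (w : Fin n → ℝ) (hw : w ≠ 0)
    (A00 A0n Ann : ℝ) (hA00 : A00 ≠ 0)
    (D : ℝ) (hD : D = A00 * Ann - A0n ^ 2) (hD0 : D ≠ 0)
    (Abar X Y Z : ℝ)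
    (hAbar : Abar = 1 / A00) (hX : X = A00 / D - 1 / A00)
    (hY : Y = -A0n / D) (hZ : Z = Ann / D - 1 / A00)
    (G : Matrix (Fin (n + 1)) (Fin (n + 1)) ℝ)
    (hG : G = A00 • (1 : Matrix (Fin (n + 1)) (Fin (n + 1)) ℝ)
        + ((Ann - A00) / Real.sqrt (∑ k, w k ^ 2) ^ 2) •
            vecMulVec (Fin.snoc w 0 : Fin (n + 1) → ℝ) (Fin.snoc w 0 : Fin (n + 1) → ℝ)
        + (A0n / Real.sqrt (∑ k, w k ^ 2)) •
            (vecMulVec (Fin.snoc 0 1 : Fin (n + 1) → ℝ) (Fin.snoc w 0 : Fin (n + 1) → ℝ)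
              + vecMulVec (Fin.snoc w 0 : Fin (n + 1) → ℝ)
                  (Fin.snoc 0 1 : Fin (n + 1) → ℝ)))
    (x : Fin n → ℝ) :
    G⁻¹.mulVec (Fin.snoc x 1 : Fin (n + 1) → ℝ)
      = (Fin.snoc
          (fun k => Abar * x k
            + (X * (∑ k', w k' * x k') / Real.sqrt (∑ k', w k' ^ 2) ^ 2
                + Y / Real.sqrt (∑ k', w k' ^ 2)) * w k)
          (Abar + Y * (∑ k', w k' * x k') / Real.sqrt (∑ k', w k' ^ 2) + Z)
        : Fin (n + 1) → ℝ) := by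
  subst hD hAbar hX hY hZ hG
  set r := Real.sqrt (∑ k, w k ^ 2) with hr_def
  have hr : r ≠ 0 := sqrt_sum_sq_ne_zero hw
  set p : Fin (n + 1) → ℝ := r⁻¹ • Fin.snoc w 0
  set q : Fin (n + 1) → ℝ := Fin.snoc 0 1
  have hp : p ⬝ᵥ p = 1 := by
    rw [smul_dotProduct, dotProduct_smul, snoc_dotProduct_snoc, mul_zero, add_zero,
      ← sq_sqrt_sum_sq w, smul_eq_mul, smul_eq_mul, ← hr_def]
    field_simp
  have hq : q ⬝ᵥ q = 1 := by simp [q, snoc_dotProduct_snoc]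
  have hpq : p ⬝ᵥ q = 0 := by simp [p, q, snoc_dotProduct_snoc]
  have hpx : p ⬝ᵥ Fin.snoc x 1 = r⁻¹ * ∑ k, w k * x k := by
    rw [smul_dotProduct, snoc_dotProduct_snoc, mul_one, add_zero, smul_eq_mul]
    rfl
  have hqx : q ⬝ᵥ Fin.snoc x 1 = 1 := by simp [q, snoc_dotProduct_snoc]
  have hG : A00 • 1 + ((Ann - A00) / r ^ 2) • vecMulVec (Fin.snoc w 0) (Fin.snoc w 0)
      + (A0n / r) • (vecMulVec q (Fin.snoc w 0) + vecMulVec (Fin.snoc w 0) q)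
      = pairMatrix p q A00 (Ann - A00) A0n 0 := by
    rw [pairMatrix_smul_left, pairMatrix, zero_smul, add_zero]
    field_simp
  rw [hG, pairMatrix_inv hp hq hpq hA00 hD0, pairMatrix_mulVec, hpx, hqx]
  ext i
  induction i using Fin.lastCases <;>
    simp only [p, q, Pi.add_apply, Pi.smul_apply, smul_eq_mul, Fin.snoc_last, Fin.snoc_castSucc,
      Pi.zero_apply] <;>
    field_simp <;>
    ring

/-- **Explicit unit-wise natural gradient direction.**
With `G` the unit-wise Fisher information matrix
`G = A₀₀ I + ((Aₙₙ − A₀₀)/‖w‖²) w̃ w̃ᵀ + (A₀ₙ/‖w‖)(e₀ w̃ᵀ + w̃ e₀ᵀ)` (where `w̃ = (w, 0)`,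
`e₀ = (0, …, 0, 1)`, `A₀₀ ≠ 0`, `D = A₀₀ Aₙₙ − A₀ₙ² ≠ 0`), the natural-gradient direction
`G⁻¹ x*` for the augmented input `x* = (x, 1)` is given in split form: its first `n`
coordinates are `Ā₀₀ x + (X (w·x)/‖w‖² + Y/‖w‖) w` and its last coordinate is
`Ā₀₀ + Y (w·x)/‖w‖ + Z`, with `Ā₀₀ = 1/A₀₀`, `X = A₀₀/D − 1/A₀₀`, `Y = −A₀ₙ/D`,
`Z = Aₙₙ/D − 1/A₀₀`. -/
theorem unitwise_natural_gradient
    (n : ℕ) (hn : 1 ≤ n) (w : Fin n → ℝ) (hw : w ≠ 0)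
    (A00 A0n Ann : ℝ) (hA00 : A00 ≠ 0)
    (D : ℝ) (hD : D = A00 * Ann - A0n ^ 2) (hD0 : D ≠ 0)
    (Abar X Y Z : ℝ)
    (hAbar : Abar = 1 / A00) (hX : X = A00 / D - 1 / A00)
    (hY : Y = -A0n / D) (hZ : Z = Ann / D - 1 / A00)
    (G : Matrix (Fin (n + 1)) (Fin (n + 1)) ℝ)
    (hG : G = A00 • (1 : Matrix (Fin (n + 1)) (Fin (n + 1)) ℝ)
        + ((Ann - A00) / Real.sqrt (∑ k, w k ^ 2) ^ 2) •
            vecMulVec (Fin.snoc w 0 : Fin (n + 1) → ℝ) (Fin.snoc w 0 : Fin (n + 1) → ℝ)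
        + (A0n / Real.sqrt (∑ k, w k ^ 2)) •
            (vecMulVec (Fin.snoc 0 1 : Fin (n + 1) → ℝ) (Fin.snoc w 0 : Fin (n + 1) → ℝ)
              + vecMulVec (Fin.snoc w 0 : Fin (n + 1) → ℝ)
                  (Fin.snoc 0 1 : Fin (n + 1) → ℝ)))
    (x : Fin n → ℝ) :
    G⁻¹.mulVec (Fin.snoc x 1 : Fin (n + 1) → ℝ)
      = (Fin.snoc
          (fun k => Abar * x k
            + (X * (∑ k', w k' * x k') / Real.sqrt (∑ k', w k' ^ 2) ^ 2
                + Y / Real.sqrt (∑ k', w k' ^ 2)) * w k)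
          (Abar + Y * (∑ k', w k' * x k') / Real.sqrt (∑ k', w k' ^ 2) + Z)
        : Fin (n + 1) → ℝ) :=
  unitwise_natural_gradient_general n w hw A00 A0n Ann hA00 D hD hD0 Abar X Y Z hAbar hX hY hZ G hG
    x
end
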